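/- arXiv:2201.08536 — 2 statements merged into one kernel-verified Lean document; each statement's English description precedes it below -/
import Mathlib

section
/- Fix δ ∈ (0,1) and a positive semidefinite matrix M ∈ ℝ^{D×D}. Let P̂₁ and P̂₂ be the averages of two mutually independent batches, each consisting of n i.i.d. generative transition samples, with batch size n ≥ 32·log(4D²/δ)/(1−γ)². Then with probability at least 1 − δ, ||(I − γP̂₁)^{-1} M (I − γP̂₂)^{-⊤}||_diag ≤ 3·||(I − γP)^{-1} M (I − γP)^{-⊤}||_diag. -/
open MeasureTheory ProbabilityTheory Finset Matrix

noncomputable section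

/-- A matrix is row-stochastic if its entries are nonnegative and its rows sum to one. -/
def RowStochastic {D : ℕ} (P : Matrix (Fin D) (Fin D) ℝ) : Prop :=
  (∀ i j, 0 ≤ P i j) ∧ (∀ i, ∑ j, P i j = 1)

/-- `‖A‖_diag`: the maximum absolute diagonal entry of a square matrix. -/
def diagNorm {D : ℕ} (A : Matrix (Fin D) (Fin D) ℝ) : ℝ := ⨆ i, |A i i|

/-- A generative transition sample `Z` for the transition matrix `P`: a random `{0,1}`-matrix
whose rows are independent, the row indexed by `x` being the indicator of a state drawn from
`P(·|x)`. -/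
structure IsGenTransSample {Ω : Type*} [MeasurableSpace Ω] {D : ℕ} (μ : Measure Ω)
    (P : Matrix (Fin D) (Fin D) ℝ) (Z : Ω → Matrix (Fin D) (Fin D) ℝ) : Prop where
  measurable_Z : ∀ x, Measurable fun ω => Z ω x
  zero_one : ∀ᵐ ω ∂μ, ∀ x x', Z ω x x' = 0 ∨ Z ω x x' = 1
  row_sum : ∀ᵐ ω ∂μ, ∀ x, ∑ x', Z ω x x' = 1
  row_law : ∀ x x', μ {ω | Z ω x x' = 1} = ENNReal.ofReal (P x x')
  rows_indep : iIndepFun (fun x ω => Z ω x) μ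

/-- An i.i.d. family of generative transition samples, indexed by `ι`. -/
structure IsIIDGenTransSamples {Ω ι : Type*} [MeasurableSpace Ω] {D : ℕ} (μ : Measure Ω)
    (P : Matrix (Fin D) (Fin D) ℝ) (Z : ι → Ω → Matrix (Fin D) (Fin D) ℝ) : Prop where
  gen : ∀ i, IsGenTransSample μ P (Z i)
  indep : iIndepFun (fun i ω x x' => Z i ω x x') μ
  ident : ∀ i j, IdentDistrib (fun ω x x' => Z i ω x x') (fun ω x x' => Z j ω x x') μ μ

/-- Average of the transition samples with indices in `[s, s+n)`. -/
def holdAvg {Ω : Type*} {D : ℕ} (Z : ℕ → Ω → Matrix (Fin D) (Fin D) ℝ) (s n : ℕ) (ω : Ω) :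
    Matrix (Fin D) (Fin D) ℝ :=
  ((n : ℝ))⁻¹ • ∑ i ∈ Finset.Ico s (s + n), Z i ω

/-!
Write `A = (I - γP)⁻¹`, `Bᵢ = (I - γP̂ᵢ)⁻¹`, `Eᵢ = P̂ᵢ - P` and `S = A M Aᵀ`. The resolvent identity
`Bᵢ = A + γ Bᵢ Eᵢ A` expands `B₁ M B₂ᵀ` into `S + γ (B₂ E₂ S)ᵀ + γ B₁ E₁ S + γ² B₁ E₁ (E₂ S)ᵀ B₂ᵀ`.
Every `Bᵢ` has ∞-operator norm at most `(1 - γ)⁻¹`, so once the entries of `Eᵢ S` are at most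
`ε (1 - γ) ‖S‖_diag` and those of `E₁ (E₂ S)ᵀ` at most `(ε (1 - γ))² ‖S‖_diag`, the diagonal of
`B₁ M B₂ᵀ` is bounded by `(1 + ε)² ‖S‖_diag`; we take `ε = 1/2`.

Since `S` is positive semidefinite, all its entries are bounded by `‖S‖_diag`, and each of these
`3 D²` entries is the deviation of an average of `n` independent bounded variables: for the
second-order ones condition on the second batch, which is independent of the first. Hoeffding's
inequality bounds each failure probability by `2 exp (-n (1 - γ)² / 8) ≤ 2 (δ / 4D²)⁴`, and a union
bound finishes the proof.
-/

open Real
open scoped ENNReal NNReal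

section DiagNorm

variable {D : ℕ}

lemma abs_apply_self_le_diagNorm (A : Matrix (Fin D) (Fin D) ℝ) (i : Fin D) :
    |A i i| ≤ diagNorm A :=
  le_ciSup (f := fun i => |A i i|) (Set.finite_range _).bddAbove i

lemma diagNorm_nonneg (A : Matrix (Fin D) (Fin D) ℝ) : 0 ≤ diagNorm A :=
  Real.iSup_nonneg fun _ => abs_nonneg _

lemma diagNorm_le {A : Matrix (Fin D) (Fin D) ℝ} {c : ℝ} (hc : 0 ≤ c)
    (h : ∀ i, |A i i| ≤ c) : diagNorm A ≤ c :=
  Real.iSup_le h hc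

lemma Matrix.PosSemidef.abs_apply_le_diagNorm {S : Matrix (Fin D) (Fin D) ℝ}
    (hS : S.PosSemidef) (i j : Fin D) : |S i j| ≤ diagNorm S := by
  have hCS := LinearMap.BilinForm.apply_mul_apply_le_of_forall_zero_le (toLinearMap₂' ℝ S)
    (fun v => by simpa [toLinearMap₂'_apply'] using hS.dotProduct_mulVec_nonneg v)
    (Pi.single i 1) (Pi.single j 1)
  simp only [toLinearMap₂'_apply', mulVec_single_one, single_one_dotProduct, col_apply] at hCS
  have hji : S j i = S i j := by simpa using hS.1.apply i j
  refine abs_le_of_sq_le_sq ?_ (diagNorm_nonneg S)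
  calc S i j ^ 2 = S i j * S j i := by rw [hji, sq]
    _ ≤ S i i * S j j := hCS
    _ ≤ diagNorm S ^ 2 := by
        rw [sq]
        exact mul_le_mul (le_of_abs_le (abs_apply_self_le_diagNorm S i))
          (le_of_abs_le (abs_apply_self_le_diagNorm S j)) hS.diag_nonneg (diagNorm_nonneg S)

end DiagNorm

section Sandwich

variable {D : ℕ}

def resolventSandwich (γ : ℝ) (Q₁ Q₂ M : Matrix (Fin D) (Fin D) ℝ) :
    Matrix (Fin D) (Fin D) ℝ :=
  (1 - γ • Q₁)⁻¹ * M * ((1 - γ • Q₂)⁻¹)ᵀ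

lemma inv_one_sub_smul_eq_add {γ : ℝ} {P Q : Matrix (Fin D) (Fin D) ℝ}
    (hP : IsUnit (1 - γ • P)) (hQ : IsUnit (1 - γ • Q)) :
    (1 - γ • Q)⁻¹ = (1 - γ • P)⁻¹ + γ • ((1 - γ • Q)⁻¹ * (Q - P) * (1 - γ • P)⁻¹) := by
  rw [← sub_eq_iff_eq_add', Matrix.inv_sub_inv (iff_of_true hQ hP), sub_sub_sub_cancel_left,
    ← smul_sub, Matrix.mul_smul, Matrix.smul_mul]

lemma resolventSandwich_eq_add {γ : ℝ} {P Q₁ Q₂ M : Matrix (Fin D) (Fin D) ℝ}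
    (hP : IsUnit (1 - γ • P)) (hQ₁ : IsUnit (1 - γ • Q₁)) (hQ₂ : IsUnit (1 - γ • Q₂))
    (hM : Mᵀ = M) :
    let S := resolventSandwich γ P P M
    resolventSandwich γ Q₁ Q₂ M = S + γ • ((1 - γ • Q₂)⁻¹ * ((Q₂ - P) * S))ᵀ
      + γ • ((1 - γ • Q₁)⁻¹ * ((Q₁ - P) * S))
      + (γ * γ) • ((1 - γ • Q₁)⁻¹ * ((Q₁ - P) * ((Q₂ - P) * S)ᵀ) * ((1 - γ • Q₂)⁻¹)ᵀ) := by
  intro S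
  conv_lhs =>
    rw [resolventSandwich, inv_one_sub_smul_eq_add hP hQ₁, inv_one_sub_smul_eq_add hP hQ₂]
  simp only [S, resolventSandwich, transpose_add, transpose_smul, transpose_mul,
    transpose_transpose, hM, add_mul, mul_add, Matrix.smul_mul, Matrix.mul_smul, smul_smul,
    Matrix.mul_assoc]
  abel

lemma resolventSandwich_apply_self {γ : ℝ} {P Q₁ Q₂ M : Matrix (Fin D) (Fin D) ℝ}
    (hP : IsUnit (1 - γ • P)) (hQ₁ : IsUnit (1 - γ • Q₁)) (hQ₂ : IsUnit (1 - γ • Q₂))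
    (hM : Mᵀ = M) (i : Fin D) :
    let S := resolventSandwich γ P P M
    resolventSandwich γ Q₁ Q₂ M i i = S i i + γ * ((1 - γ • Q₂)⁻¹ * ((Q₂ - P) * S)) i i
      + γ * ((1 - γ • Q₁)⁻¹ * ((Q₁ - P) * S)) i i
      + γ * γ * ((1 - γ • Q₁)⁻¹ * ((Q₁ - P) * ((Q₂ - P) * S)ᵀ * ((1 - γ • Q₂)⁻¹)ᵀ) :
        Matrix (Fin D) (Fin D) ℝ) i i := by
  rw [resolventSandwich_eq_add hP hQ₁ hQ₂ hM, Matrix.mul_assoc _ ((Q₁ - P) * _)]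
  simp only [Matrix.add_apply, Matrix.smul_apply, smul_eq_mul, transpose_apply]

def SmallDeviations (P S Q₁ Q₂ : Matrix (Fin D) (Fin D) ℝ) (ε r : ℝ) : Prop :=
  (∀ i j, |((Q₁ - P) * S) i j| ≤ r) ∧ (∀ i j, |((Q₂ - P) * S) i j| ≤ r) ∧
    ∀ i j, |((Q₁ - P) * ((Q₂ - P) * S)ᵀ) i j| ≤ ε * r

-- The bound on row `j` of `(Q₂ - P) * S` in the last case is what lets the second-order entry be
-- controlled conditionally on `Q₂`.
lemma exists_of_not_smallDeviations {P S Q₁ Q₂ : Matrix (Fin D) (Fin D) ℝ} {ε r : ℝ}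
    (h : ¬ SmallDeviations P S Q₁ Q₂ ε r) :
    ∃ i j, r < |((Q₁ - P) * S) i j| ∨ r < |((Q₂ - P) * S) i j| ∨
      (ε * r < |((Q₁ - P) * ((Q₂ - P) * S)ᵀ) i j| ∧ ∀ k, |((Q₂ - P) * S) j k| ≤ r) := by
  simp only [SmallDeviations, not_and_or, not_forall, not_le] at h
  rcases h with ⟨i, j, h⟩ | ⟨i, j, h⟩ | ⟨i, j, h⟩
  · exact ⟨i, j, Or.inl h⟩
  · exact ⟨i, j, Or.inr (Or.inl h)⟩
  · by_cases h₂ : ∀ k, |((Q₂ - P) * S) j k| ≤ r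
    · exact ⟨i, j, Or.inr (Or.inr ⟨h, h₂⟩)⟩
    · obtain ⟨k, hk⟩ := not_forall.mp h₂
      exact ⟨j, k, Or.inr (Or.inl (not_le.mp hk))⟩

end Sandwich

section LinftyOpNorm

attribute [local instance] Matrix.linftyOpNormedAddCommGroup Matrix.linftyOpNormedRing
  Matrix.linftyOpNormedAlgebra

lemma abs_mul_apply_le_linfty_opNorm_mul {ι : Type*} [Fintype ι] (G B : Matrix ι ι ℝ) {b : ℝ}
    (hB : ∀ i j, |B i j| ≤ b) (i j : ι) : |(G * B) i j| ≤ ‖G‖ * b := by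
  have hrow : ∑ k, |G i k| ≤ ‖G‖ := by
    rw [linfty_opNorm_def]
    calc ∑ k, |G i k| = ((∑ k, ‖G i k‖₊ : ℝ≥0) : ℝ) := by push_cast; rfl
      _ ≤ _ := NNReal.coe_le_coe.mpr (Finset.le_sup (f := fun i => ∑ k, ‖G i k‖₊) (mem_univ i))
  calc |(G * B) i j| ≤ ∑ k, |G i k| * |B k j| := by
        rw [mul_apply]; exact (Finset.abs_sum_le_sum_abs _ _).trans_eq (by simp [abs_mul])
    _ ≤ ∑ k, |G i k| * b := by gcongr; exact hB _ _
    _ ≤ ‖G‖ * b := by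
        rw [← Finset.sum_mul]
        exact mul_le_mul_of_nonneg_right hrow ((abs_nonneg _).trans (hB i j))

variable {ι : Type*} [Fintype ι] [DecidableEq ι] {γ : ℝ} {Q : Matrix ι ι ℝ}

lemma linfty_opNorm_le_one_of_mem_rowStochastic (hQ : Q ∈ rowStochastic ℝ ι) : ‖Q‖ ≤ 1 := by
  rw [linfty_opNorm_def, NNReal.coe_le_one, Finset.sup_le_iff]
  intro i _
  rw [← NNReal.coe_le_one]
  push_cast
  simp_rw [Real.norm_of_nonneg (hQ.1 i _), sum_row_of_mem_rowStochastic hQ, le_refl]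

lemma linfty_opNorm_smul_le (hγ : 0 ≤ γ) (hQ : Q ∈ rowStochastic ℝ ι) : ‖γ • Q‖ ≤ γ := by
  rw [norm_smul, Real.norm_of_nonneg hγ]
  exact mul_le_of_le_one_right hγ (linfty_opNorm_le_one_of_mem_rowStochastic hQ)

lemma isUnit_one_sub_smul (hγ : γ ∈ Set.Ico (0 : ℝ) 1) (hQ : Q ∈ rowStochastic ℝ ι) :
    IsUnit (1 - γ • Q) :=
  isUnit_one_sub_of_norm_lt_one ((linfty_opNorm_smul_le hγ.1 hQ).trans_lt hγ.2)

lemma linfty_opNorm_inv_one_sub_smul_le (hγ : γ ∈ Set.Ico (0 : ℝ) 1)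
    (hQ : Q ∈ rowStochastic ℝ ι) : ‖(1 - γ • Q)⁻¹‖ ≤ (1 - γ)⁻¹ := by
  have hγQ := linfty_opNorm_smul_le hγ.1 hQ
  have hlt := hγQ.trans_lt hγ.2
  rw [nonsing_inv_eq_ringInverse, ← geom_series_eq_inverse _ hlt]
  calc ‖∑' k, (γ • Q) ^ k‖ ≤ ‖(1 : Matrix ι ι ℝ)‖ - 1 + (1 - ‖γ • Q‖)⁻¹ :=
        tsum_geometric_le_of_norm_lt_one _ hlt
    _ ≤ (1 - γ)⁻¹ := by
        have h1 := linfty_opNorm_le_one_of_mem_rowStochastic (one_mem (rowStochastic ℝ ι))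
        have h2 : (1 - ‖γ • Q‖)⁻¹ ≤ (1 - γ)⁻¹ := inv_anti₀ (by linarith [hγ.2]) (by linarith)
        linarith

lemma diagNorm_resolventSandwich_le {D : ℕ} {γ ε : ℝ} (hγ : γ ∈ Set.Ico (0 : ℝ) 1)
    (hε : 0 ≤ ε) {P Q₁ Q₂ M : Matrix (Fin D) (Fin D) ℝ} (hP : P ∈ rowStochastic ℝ (Fin D))
    (hQ₁ : Q₁ ∈ rowStochastic ℝ (Fin D)) (hQ₂ : Q₂ ∈ rowStochastic ℝ (Fin D)) (hM : Mᵀ = M)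
    (hdev : SmallDeviations P (resolventSandwich γ P P M) Q₁ Q₂ (ε * (1 - γ))
      (ε * (1 - γ) * diagNorm (resolventSandwich γ P P M))) :
    diagNorm (resolventSandwich γ Q₁ Q₂ M)
      ≤ (1 + ε) ^ 2 * diagNorm (resolventSandwich γ P P M) := by
  obtain ⟨hG₁, hG₂, hH⟩ := hdev
  have hγ0 : 0 ≤ γ := hγ.1
  set S := resolventSandwich γ P P M
  set d := diagNorm S
  have hd : 0 ≤ d := diagNorm_nonneg S
  have hB₁ := linfty_opNorm_inv_one_sub_smul_le hγ hQ₁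
  have hB₂ := linfty_opNorm_inv_one_sub_smul_le hγ hQ₂
  have hres : ∀ {B X : Matrix (Fin D) (Fin D) ℝ} {b : ℝ}, ‖B‖ ≤ (1 - γ)⁻¹ →
      (∀ i j, |X i j| ≤ (1 - γ) * b) → ∀ i j, |(B * X) i j| ≤ b := by
    intro B X b hB hX i j
    calc |(B * X) i j| ≤ ‖B‖ * ((1 - γ) * b) := abs_mul_apply_le_linfty_opNorm_mul B X hX i j
      _ ≤ (1 - γ)⁻¹ * ((1 - γ) * b) :=
          mul_le_mul_of_nonneg_right hB ((abs_nonneg _).trans (hX i j))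
      _ = b := by field_simp [(sub_pos.mpr hγ.2).ne']
  have h₁ : ∀ i, |((1 - γ • Q₁)⁻¹ * ((Q₁ - P) * S)) i i| ≤ ε * d :=
    fun i => hres hB₁ (fun i j => (hG₁ i j).trans_eq (by ring)) i i
  have h₂ : ∀ i, |((1 - γ • Q₂)⁻¹ * ((Q₂ - P) * S)) i i| ≤ ε * d :=
    fun i => hres hB₂ (fun i j => (hG₂ i j).trans_eq (by ring)) i i
  have h₁₂ : ∀ i, |((1 - γ • Q₁)⁻¹ * ((Q₁ - P) * ((Q₂ - P) * S)ᵀ * ((1 - γ • Q₂)⁻¹)ᵀ) :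
      Matrix (Fin D) (Fin D) ℝ) i i| ≤ ε * (ε * d) := by
    have hright : ∀ i j, |((Q₁ - P) * ((Q₂ - P) * S)ᵀ * ((1 - γ • Q₂)⁻¹)ᵀ :
        Matrix (Fin D) (Fin D) ℝ) i j| ≤ (1 - γ) * (ε * (ε * d)) := by
      intro i j
      rw [← transpose_transpose ((Q₁ - P) * ((Q₂ - P) * S)ᵀ), ← transpose_mul, transpose_apply]
      exact hres hB₂ (fun i j => (hH j i).trans_eq (by ring)) j i
    exact fun i => hres hB₁ hright i i
  refine diagNorm_le (by positivity) fun i => ?_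
  rw [resolventSandwich_apply_self (isUnit_one_sub_smul hγ hP) (isUnit_one_sub_smul hγ hQ₁)
    (isUnit_one_sub_smul hγ hQ₂) hM]
  calc _ ≤ d + γ * (ε * d) + γ * (ε * d) + (γ * γ) * (ε * (ε * d)) := by
        refine (abs_add_le _ _).trans (add_le_add ((abs_add_le _ _).trans (add_le_add
          ((abs_add_le _ _).trans (add_le_add (abs_apply_self_le_diagNorm S i) ?_)) ?_)) ?_) <;>
        rw [abs_mul, abs_of_nonneg (by positivity)] <;> gcongr
        exacts [h₂ i, h₁ i, h₁₂ i]
    _ ≤ (1 + ε) ^ 2 * d := by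
        have : γ * γ ≤ 1 := by nlinarith [hγ.2]
        nlinarith [mul_nonneg hε hd, mul_nonneg (mul_nonneg hε hε) hd, hγ.2]

end LinftyOpNorm

section Probability

variable {Ω : Type*} [MeasurableSpace Ω] {μ : Measure Ω}

lemma ProbabilityTheory.HasSubgaussianMGF.measure_abs_sum_ge_le_of_iIndepFun [IsFiniteMeasure μ]
    {ι : Type*} {X : ι → Ω → ℝ} (h_indep : iIndepFun X μ) {c : ℝ≥0} {s : Finset ι}
    (h_subG : ∀ i ∈ s, HasSubgaussianMGF (X i) c μ) {ε : ℝ} (hε : 0 ≤ ε) :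
    μ {ω | ε ≤ |∑ i ∈ s, X i ω|} ≤ ENNReal.ofReal (2 * exp (-ε ^ 2 / (2 * (s.card * c)))) := by
  have h_neg : iIndepFun (fun i ω => -X i ω) μ :=
    h_indep.comp (fun _ x => -x) fun _ => measurable_neg
  have hsum (Y : ι → Ω → ℝ) (hY : iIndepFun Y μ) (hYs : ∀ i ∈ s, HasSubgaussianMGF (Y i) c μ) :
      μ {ω | ε ≤ ∑ i ∈ s, Y i ω} ≤ ENNReal.ofReal (exp (-ε ^ 2 / (2 * (s.card * c)))) := by
    rw [← ENNReal.ofReal_toReal (measure_ne_top μ _), ← measureReal_def]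
    refine ENNReal.ofReal_le_ofReal ?_
    simpa using HasSubgaussianMGF.measure_sum_ge_le_of_iIndepFun hY hYs hε
  have hsub : {ω | ε ≤ |∑ i ∈ s, X i ω|} ⊆
      {ω | ε ≤ ∑ i ∈ s, X i ω} ∪ {ω | ε ≤ ∑ i ∈ s, -X i ω} := by
    intro ω (hω : ε ≤ |∑ i ∈ s, X i ω|)
    rcases le_abs'.mp hω with h | h
    · exact Or.inr (by simpa [Finset.sum_neg_distrib] using le_neg_of_le_neg h)
    · exact Or.inl h
  calc μ {ω | ε ≤ |∑ i ∈ s, X i ω|}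
      ≤ μ {ω | ε ≤ ∑ i ∈ s, X i ω} + μ {ω | ε ≤ ∑ i ∈ s, -X i ω} :=
        (measure_mono hsub).trans (measure_union_le _ _)
    _ ≤ ENNReal.ofReal (exp (-ε ^ 2 / (2 * (s.card * c))))
        + ENNReal.ofReal (exp (-ε ^ 2 / (2 * (s.card * c)))) :=
        add_le_add (hsum X h_indep h_subG) (hsum _ h_neg fun i hi => (h_subG i hi).neg)
    _ = ENNReal.ofReal (2 * exp (-ε ^ 2 / (2 * (s.card * c)))) := by
        rw [← ENNReal.ofReal_add (by positivity) (by positivity), ← two_mul]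

lemma ProbabilityTheory.IndepFun.measure_preimage_le_of_forall_section [IsProbabilityMeasure μ]
    {α β : Type*} [MeasurableSpace α] [MeasurableSpace β] {X : Ω → α} {Y : Ω → β}
    (hXY : IndepFun X Y μ) (hX : Measurable X) (hY : Measurable Y) {C : Set (α × β)}
    (hC : MeasurableSet C) {p : ℝ≥0∞} (h : ∀ a, μ (Y ⁻¹' (Prod.mk a ⁻¹' C)) ≤ p) :
    μ ((fun ω => (X ω, Y ω)) ⁻¹' C) ≤ p := by
  have : IsProbabilityMeasure (μ.map X) := Measure.isProbabilityMeasure_map hX.aemeasurable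
  rw [← Measure.map_apply (hX.prodMk hY) hC,
    (indepFun_iff_map_prod_eq_prod_map_map hX.aemeasurable hY.aemeasurable).mp hXY,
    Measure.prod_apply hC]
  calc ∫⁻ a, μ.map Y (Prod.mk a ⁻¹' C) ∂μ.map X ≤ ∫⁻ _, p ∂μ.map X :=
        lintegral_mono fun a =>
          (Measure.map_apply hY (measurable_prodMk_left hC)).trans_le (h a)
    _ = p := by simp

lemma measure_iUnion_le_card_mul {ι : Type*} [Fintype ι] {s : ι → Set Ω} {p : ℝ≥0∞}
    (h : ∀ i, μ (s i) ≤ p) : μ (⋃ i, s i) ≤ Fintype.card ι * p :=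
  (measure_iUnion_fintype_le μ s).trans <|
    (Finset.sum_le_card_nsmul _ _ _ fun i _ => h i).trans (by simp)

lemma ofReal_one_sub_le_measure [IsProbabilityMeasure μ] {s : Set Ω} {q : Ω → Prop} {δ : ℝ}
    (hδ : 0 ≤ δ) (hq : μ {ω | ¬ q ω} ≤ ENNReal.ofReal δ) (h : ∀ᵐ ω ∂μ, q ω → ω ∈ s) :
    ENNReal.ofReal (1 - δ) ≤ μ s := by
  have hsc : μ sᶜ ≤ ENNReal.ofReal δ :=
    (measure_mono_ae (h.mono fun ω hω hωs hqω => hωs (hω hqω))).trans hq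
  rw [ENNReal.ofReal_sub _ hδ, ENNReal.ofReal_one, tsub_le_iff_right]
  calc 1 = μ (s ∪ sᶜ) := by simp
    _ ≤ μ s + μ sᶜ := measure_union_le _ _
    _ ≤ μ s + ENNReal.ofReal δ := by gcongr

end Probability

lemma abs_mulVec_apply_le_of_mem_rowStochastic {ι : Type*} [Fintype ι] [DecidableEq ι]
    {Q : Matrix ι ι ℝ} (hQ : Q ∈ rowStochastic ℝ ι) {v : ι → ℝ} {c : ℝ}
    (hv : ∀ k, |v k| ≤ c) (x : ι) : |(Q *ᵥ v) x| ≤ c :=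
  calc |(Q *ᵥ v) x| ≤ ∑ k, Q x k * |v k| :=
        (Finset.abs_sum_le_sum_abs _ _).trans_eq (by simp [abs_mul, abs_of_nonneg (hQ.1 x _)])
    _ ≤ ∑ k, Q x k * c := by gcongr with k; exacts [hQ.1 x k, hv k]
    _ = c := by rw [← Finset.sum_mul, sum_row_of_mem_rowStochastic hQ, one_mul]

lemma holdAvg_sub_mulVec_apply {Ω : Type*} {D : ℕ} {Z : ℕ → Ω → Matrix (Fin D) (Fin D) ℝ}
    {P : Matrix (Fin D) (Fin D) ℝ} {n : ℕ} (hn : n ≠ 0) (s : ℕ) (ω : Ω) (v : Fin D → ℝ)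
    (y : Fin D) :
    ((holdAvg Z s n ω - P) *ᵥ v) y
      = (n : ℝ)⁻¹ * ∑ i ∈ Finset.Ico s (s + n), ((Z i ω *ᵥ v) y - (P *ᵥ v) y) := by
  rw [Finset.sum_sub_distrib, Finset.sum_const, Nat.card_Ico, Nat.add_sub_cancel_left,
    nsmul_eq_mul, mul_sub, ← mul_assoc, inv_mul_cancel₀ (Nat.cast_ne_zero.mpr hn), one_mul,
    sub_mulVec, holdAvg, smul_mulVec, sum_mulVec]
  simp [Finset.sum_apply]

section Sampling

variable {Ω : Type*} [MeasurableSpace Ω] {μ : Measure Ω} {D : ℕ} {P : Matrix (Fin D) (Fin D) ℝ}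

namespace IsGenTransSample

variable {Z : Ω → Matrix (Fin D) (Fin D) ℝ}

lemma ae_mem_rowStochastic (hZ : IsGenTransSample μ P Z) :
    ∀ᵐ ω ∂μ, Z ω ∈ rowStochastic ℝ (Fin D) := by
  filter_upwards [hZ.zero_one, hZ.row_sum] with ω h01 hsum
  exact mem_rowStochastic_iff_sum.mpr
    ⟨fun x x' => (h01 x x').elim (fun h => h.ge) (fun h => h ▸ zero_le_one), hsum⟩

lemma measurable_apply (hZ : IsGenTransSample μ P Z) (x x' : Fin D) :
    Measurable fun ω => Z ω x x' :=
  (measurable_pi_apply x').comp (hZ.measurable_Z x)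

lemma integral_apply (hZ : IsGenTransSample μ P Z) {x x' : Fin D} (hP : 0 ≤ P x x') :
    ∫ ω, Z ω x x' ∂μ = P x x' := by
  have hset : MeasurableSet {ω | Z ω x x' = 1} :=
    hZ.measurable_apply x x' (measurableSet_singleton 1)
  have hind : (fun ω => Z ω x x') =ᵐ[μ] {ω | Z ω x x' = 1}.indicator 1 := by
    filter_upwards [hZ.zero_one] with ω h
    rcases h x x' with h | h <;> simp [h]
  rw [integral_congr_ae hind, integral_indicator_one hset, measureReal_def, hZ.row_law,
    ENNReal.toReal_ofReal hP]

lemma integral_mulVec_apply [IsFiniteMeasure μ] (hZ : IsGenTransSample μ P Z)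
    (hP : ∀ x x', 0 ≤ P x x') (v : Fin D → ℝ) (x : Fin D) :
    ∫ ω, (Z ω *ᵥ v) x ∂μ = (P *ᵥ v) x := by
  have hint : ∀ k, Integrable (fun ω => Z ω x k * v k) μ := fun k =>
    (Integrable.of_mem_Icc 0 1 (hZ.measurable_apply x k).aemeasurable
      (by filter_upwards [hZ.ae_mem_rowStochastic] with ω hω
          exact ⟨hω.1 x k, le_one_of_mem_rowStochastic hω⟩)).mul_const _
  simp only [mulVec, dotProduct]
  rw [integral_finsetSum _ fun k _ => hint k]
  simp_rw [integral_mul_const, hZ.integral_apply (hP x _)]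

end IsGenTransSample

namespace IsIIDGenTransSamples

variable {Z : ℕ → Ω → Matrix (Fin D) (Fin D) ℝ} {n : ℕ}

lemma ae_holdAvg_mem_rowStochastic (hZ : IsIIDGenTransSamples μ P Z) (hn : n ≠ 0) (s : ℕ) :
    ∀ᵐ ω ∂μ, holdAvg Z s n ω ∈ rowStochastic ℝ (Fin D) := by
  filter_upwards [ae_all_iff.mpr fun i => (hZ.gen i).ae_mem_rowStochastic] with ω hω
  rw [holdAvg, Finset.smul_sum]
  refine convex_rowStochastic.sum_mem (fun _ _ => by positivity) ?_ fun i _ => hω i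
  rw [Finset.sum_const, Nat.card_Ico, Nat.add_sub_cancel_left, nsmul_eq_mul,
    mul_inv_cancel₀ (Nat.cast_ne_zero.mpr hn)]

lemma measurable_holdAvg (hZ : IsIIDGenTransSamples μ P Z) (s : ℕ) :
    Measurable fun ω x x' => holdAvg Z s n ω x x' := by
  simp only [holdAvg, Matrix.smul_apply, Matrix.sum_apply, smul_eq_mul]
  have := fun i => (hZ.gen i).measurable_apply
  fun_prop

lemma indepFun_holdAvg (hZ : IsIIDGenTransSamples μ P Z) {s s' : ℕ}
    (hss' : Disjoint (Finset.Ico s (s + n)) (Finset.Ico s' (s' + n))) :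
    IndepFun (fun ω x x' => holdAvg Z s n ω x x') (fun ω x x' => holdAvg Z s' n ω x x') μ := by
  have hblocks := hZ.indep.indepFun_finset _ _ hss'
    fun i => measurable_pi_lambda _ (hZ.gen i).measurable_Z
  have havg (t : ℕ) : Measurable fun (u : Finset.Ico t (t + n) → Fin D → Fin D → ℝ) x x' =>
      (n : ℝ)⁻¹ * ∑ i, u i x x' := by fun_prop
  convert hblocks.comp (havg s) (havg s') using 1 <;>
  · ext ω x x'
    simp [holdAvg, Matrix.sum_apply, ← Finset.sum_coe_sort (Finset.Ico _ _)]

lemma measure_lt_abs_holdAvg_sub_mulVec_le [IsProbabilityMeasure μ]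
    (hZ : IsIIDGenTransSamples μ P Z) (hP : ∀ x x', 0 ≤ P x x') (hn : n ≠ 0) (s : ℕ)
    (y : Fin D) {v : Fin D → ℝ} {c : ℝ} (hc : 0 ≤ c) (hv : ∀ k, |v k| ≤ c) {ε : ℝ}
    (hε : 0 ≤ ε) :
    μ {ω | ε * c < |((holdAvg Z s n ω - P) *ᵥ v) y|}
      ≤ ENNReal.ofReal (2 * exp (-(n * ε ^ 2) / 2)) := by
  rcases hc.eq_or_lt with rfl | hc
  · have hv0 : v = 0 := funext fun k => abs_nonpos_iff.mp (hv k)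
    simp [hv0]
  set m := (P *ᵥ v) y
  have hφ : Measurable fun u : Fin D → Fin D → ℝ => (u *ᵥ v) y := by
    simp only [mulVec, dotProduct]; fun_prop
  have hindep : iIndepFun (fun i ω => (Z i ω *ᵥ v) y - m) μ :=
    hZ.indep.comp _ fun _ => hφ.sub_const m
  have hsubG : ∀ i ∈ Finset.Ico s (s + n),
      HasSubgaussianMGF (fun ω => (Z i ω *ᵥ v) y - m) ((‖c - -c‖₊ / 2) ^ 2) μ := by
    intro i _
    have h := hasSubgaussianMGF_of_mem_Icc (X := fun ω => (Z i ω *ᵥ v) y) (a := -c) (b := c)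
      (hφ.comp (measurable_pi_lambda _ (hZ.gen i).measurable_Z)).aemeasurable
      (by filter_upwards [(hZ.gen i).ae_mem_rowStochastic] with ω hω
          exact abs_le.mp (abs_mulVec_apply_le_of_mem_rowStochastic hω hv y))
    rwa [(hZ.gen i).integral_mulVec_apply hP v y] at h
  have hn' : (0 : ℝ) < n := Nat.cast_pos.mpr (Nat.pos_of_ne_zero hn)
  have hsub : {ω | ε * c < |((holdAvg Z s n ω - P) *ᵥ v) y|}
      ⊆ {ω | n * (ε * c) ≤ |∑ i ∈ Finset.Ico s (s + n), ((Z i ω *ᵥ v) y - m)|} := by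
    intro ω (hω : ε * c < _)
    rw [holdAvg_sub_mulVec_apply hn, abs_mul, abs_inv, Nat.abs_cast, ← div_eq_inv_mul,
      lt_div_iff₀ hn'] at hω
    exact (mul_comm _ (n : ℝ) ▸ hω).le
  refine (measure_mono hsub).trans <|
    (HasSubgaussianMGF.measure_abs_sum_ge_le_of_iIndepFun hindep hsubG (by positivity)).trans_eq ?_
  rw [Nat.card_Ico, Nat.add_sub_cancel_left]
  congr 3
  simp only [NNReal.coe_pow, NNReal.coe_div, coe_nnnorm, Real.norm_eq_abs, sub_neg_eq_add]
  rw [← two_mul, abs_of_pos (by positivity)]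
  field_simp
  norm_num

lemma measure_lt_abs_holdAvg_mul_holdAvg_le [IsProbabilityMeasure μ]
    (hZ : IsIIDGenTransSamples μ P Z) (hP : ∀ x x', 0 ≤ P x x') (hn : n ≠ 0) {s s' : ℕ}
    (hss' : Disjoint (Finset.Ico s (s + n)) (Finset.Ico s' (s' + n)))
    (S : Matrix (Fin D) (Fin D) ℝ) (y z : Fin D) {r ε : ℝ} (hr : 0 ≤ r) (hε : 0 ≤ ε) :
    μ {ω | ε * r < |((holdAvg Z s n ω - P) * ((holdAvg Z s' n ω - P) * S)ᵀ) y z| ∧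
        ∀ j, |((holdAvg Z s' n ω - P) * S) z j| ≤ r}
      ≤ ENNReal.ofReal (2 * exp (-(n * ε ^ 2) / 2)) := by
  set C : Set ((Fin D → ℝ) × (Fin D → Fin D → ℝ)) :=
    {p | ε * r < |((of p.2 - P) *ᵥ p.1) y| ∧ ∀ j, |p.1 j| ≤ r}
  have hC : MeasurableSet C := by
    simp only [C, Set.ofPred_and, Set.ofPred_forall]
    refine (measurableSet_lt measurable_const ?_).inter (MeasurableSet.iInter fun j =>
      measurableSet_le (by fun_prop) measurable_const)
    simp only [mulVec, dotProduct, Matrix.sub_apply, of_apply]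
    fun_prop
  have hrow : Measurable fun (u : Fin D → Fin D → ℝ) j => ((of u - P) * S) z j := by
    simp only [mul_apply, Matrix.sub_apply, of_apply]; fun_prop
  have hind := (hZ.indepFun_holdAvg hss'.symm).comp hrow measurable_id
  refine hind.measure_preimage_le_of_forall_section (hrow.comp (hZ.measurable_holdAvg s'))
    (hZ.measurable_holdAvg s) hC fun w => ?_
  by_cases hw : ∀ j, |w j| ≤ r
  · exact (measure_mono fun ω hω => hω.1).trans
      (hZ.measure_lt_abs_holdAvg_sub_mulVec_le hP hn s y hr hw hε)
  · exact (measure_mono_null (fun ω hω => (hw hω.2).elim) measure_empty).trans_le zero_le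

lemma measure_not_smallDeviations_le [IsProbabilityMeasure μ]
    (hZ : IsIIDGenTransSamples μ P Z) (hP : ∀ x x', 0 ≤ P x x') (hn : n ≠ 0)
    {S : Matrix (Fin D) (Fin D) ℝ} {c : ℝ} (hc : 0 ≤ c) (hS : ∀ i j, |S i j| ≤ c) {ε : ℝ}
    (hε : 0 ≤ ε) :
    μ {ω | ¬ SmallDeviations P S (holdAvg Z 0 n ω) (holdAvg Z n n ω) ε (ε * c)}
      ≤ ENNReal.ofReal (D * D * (3 * (2 * exp (-(n * ε ^ 2) / 2)))) := by
  set p := 2 * exp (-(n * ε ^ 2) / 2)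
  have hG (s : ℕ) (y j : Fin D) : μ {ω | ε * c < |((holdAvg Z s n ω - P) * S) y j|}
      ≤ ENNReal.ofReal p :=
    hZ.measure_lt_abs_holdAvg_sub_mulVec_le hP hn s y hc (fun k => hS k j) hε
  have hH (y z : Fin D) := hZ.measure_lt_abs_holdAvg_mul_holdAvg_le hP hn (s := 0) (s' := n)
    (by simpa using Finset.Ico_disjoint_Ico_consecutive 0 n (n + n)) S y z (mul_nonneg hε hc) hε
  calc _ ≤ μ (⋃ q : Fin D × Fin D,
        ({ω | ε * c < |((holdAvg Z 0 n ω - P) * S) q.1 q.2|} ∪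
          ({ω | ε * c < |((holdAvg Z n n ω - P) * S) q.1 q.2|} ∪
          {ω | ε * (ε * c) < |((holdAvg Z 0 n ω - P) * ((holdAvg Z n n ω - P) * S)ᵀ) q.1 q.2| ∧
            ∀ k, |((holdAvg Z n n ω - P) * S) q.2 k| ≤ ε * c}))) :=
        measure_mono fun ω hω => by
          obtain ⟨i, j, h⟩ := exists_of_not_smallDeviations hω
          exact Set.mem_iUnion.mpr ⟨(i, j), h⟩
    _ ≤ Fintype.card (Fin D × Fin D) *
          (ENNReal.ofReal p + (ENNReal.ofReal p + ENNReal.ofReal p)) :=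
        measure_iUnion_le_card_mul fun q => (measure_union_le _ _).trans <| add_le_add (hG 0 _ _)
          ((measure_union_le _ _).trans (add_le_add (hG n _ _) (hH _ _)))
    _ = ENNReal.ofReal (D * D * (3 * p)) := by
        rw [← ENNReal.ofReal_add (by positivity) (by positivity),
          ← ENNReal.ofReal_add (by positivity) (by positivity), Fintype.card_prod,
          Fintype.card_fin, ← ENNReal.ofReal_natCast, ← ENNReal.ofReal_mul (by positivity)]
        congr 1
        push_cast
        ring

end IsIIDGenTransSamples

end Sampling

lemma sq_mul_exp_le_of_sample_size {D n : ℕ} {γ δ : ℝ} (hD : 0 < D) (hγ : γ < 1)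
    (hδ : δ ∈ Set.Ioo (0 : ℝ) 1)
    (hn : 32 * Real.log (4 * (D : ℝ) ^ 2 / δ) / (1 - γ) ^ 2 ≤ (n : ℝ)) :
    (D * D : ℝ) * (3 * (2 * exp (-(n * (1 / 2 * (1 - γ)) ^ 2) / 2))) ≤ δ := by
  obtain ⟨hδ0, hδ1⟩ := hδ
  have hD1 : (1 : ℝ) ≤ D := Nat.one_le_cast.mpr hD
  set u := δ / (4 * (D : ℝ) ^ 2)
  have hu0 : 0 < u := by positivity
  have hu : u ≤ 1 / 4 := by
    rw [div_le_iff₀ (by positivity)]; nlinarith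
  have hn' : 32 * -Real.log u ≤ n * (1 - γ) ^ 2 := by
    rwa [← Real.log_inv, inv_div, ← div_le_iff₀ (by nlinarith)]
  have hexp : exp (-(n * (1 / 2 * (1 - γ)) ^ 2) / 2) ≤ u / 64 :=
    calc exp (-(n * (1 / 2 * (1 - γ)) ^ 2) / 2) ≤ exp (Real.log (u ^ 4)) := by
          rw [Real.log_pow]; gcongr; push_cast; nlinarith
      _ = u * u ^ 3 := by rw [Real.exp_log (by positivity)]; ring
      _ ≤ u * (1 / 4) ^ 3 := by gcongr
      _ = u / 64 := by ring
  calc (D * D : ℝ) * (3 * (2 * exp (-(n * (1 / 2 * (1 - γ)) ^ 2) / 2)))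
      ≤ D * D * (3 * (2 * (u / 64))) := by gcongr
    _ ≤ 4 * D ^ 2 * u := by nlinarith [(by positivity : (0 : ℝ) < D ^ 2 * u)]
    _ = δ := by simp only [u]; field_simp

/-- **Lemma (Statement 2).** For `δ ∈ (0,1)` and a PSD matrix `M`, if `P̂₁` and `P̂₂` are the
averages of two mutually independent batches of `n ≥ 32 log(4D²/δ)/(1-γ)²` i.i.d. generative
transition samples, then with probability at least `1 - δ`,
`‖(I - γP̂₁)⁻¹ M (I - γP̂₂)⁻ᵀ‖_diag ≤ 3 ‖(I - γP)⁻¹ M (I - γP)⁻ᵀ‖_diag`. -/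
theorem holdout_diag_norm_bound
    {Ω : Type*} [MeasurableSpace Ω] (μ : Measure Ω) [IsProbabilityMeasure μ]
    {D : ℕ} (hD : 0 < D) (γ : ℝ) (hγ : γ ∈ Set.Ioo (0 : ℝ) 1)
    (P : Matrix (Fin D) (Fin D) ℝ) (hP : RowStochastic P)
    (M : Matrix (Fin D) (Fin D) ℝ) (hM : M.PosSemidef)
    (δ : ℝ) (hδ : δ ∈ Set.Ioo (0 : ℝ) 1)
    (n : ℕ) (hn : 32 * Real.log (4 * (D : ℝ) ^ 2 / δ) / (1 - γ) ^ 2 ≤ (n : ℝ))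
    (Z : ℕ → Ω → Matrix (Fin D) (Fin D) ℝ)
    (hiid : IsIIDGenTransSamples μ P Z) :
    ENNReal.ofReal (1 - δ) ≤
      μ {ω | diagNorm ((1 - γ • holdAvg Z 0 n ω)⁻¹ * M * ((1 - γ • holdAvg Z n n ω)⁻¹)ᵀ) ≤
        3 * diagNorm ((1 - γ • P)⁻¹ * M * ((1 - γ • P)⁻¹)ᵀ)} := by
  have hP : P ∈ rowStochastic ℝ (Fin D) := mem_rowStochastic_iff_sum.mpr hP
  have hMt : Mᵀ = M := (by simpa using hM.1 : M.IsSymm)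
  have hS : (resolventSandwich γ P P M).PosSemidef := by
    simpa [resolventSandwich] using hM.mul_mul_conjTranspose_same (1 - γ • P)⁻¹
  have hn0 : n ≠ 0 := by
    have hL : 0 < Real.log (4 * (D : ℝ) ^ 2 / δ) := Real.log_pos <| by
      rw [lt_div_iff₀ hδ.1]; nlinarith [hδ.2, (Nat.one_le_cast (α := ℝ)).mpr hD]
    have := (div_pos (mul_pos (by norm_num) hL) (pow_pos (sub_pos.mpr hγ.2) 2)).trans_le hn
    exact Nat.cast_ne_zero.mp this.ne'
  have hε : (0 : ℝ) ≤ 1 / 2 * (1 - γ) := by linarith [hγ.2]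
  have hdev := hiid.measure_not_smallDeviations_le hP.1 hn0 (diagNorm_nonneg _)
    hS.abs_apply_le_diagNorm hε
  refine ofReal_one_sub_le_measure hδ.1.le
    (hdev.trans (ENNReal.ofReal_le_ofReal (sq_mul_exp_le_of_sample_size hD hγ.2 hδ hn))) ?_
  filter_upwards [hiid.ae_holdAvg_mem_rowStochastic hn0 0,
    hiid.ae_holdAvg_mem_rowStochastic hn0 n] with ω h₁ h₂ hsmall
  exact (diagNorm_resolventSandwich_le (ε := 1 / 2) ⟨hγ.1.le, hγ.2⟩ (by norm_num) hP h₁ h₂ hMt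
    hsmall).trans (mul_le_mul_of_nonneg_right (by norm_num) (diagNorm_nonneg _))

end
end

section
/- Let γ ∈ (0,1) and let T̂_1, …, T̂_N (N ≥ 2) be empirical Bellman optimality operators built from arbitrary (deterministic) realizations of N generative samples, i.e. T̂_i(Q)(x,u) = R_i(x,u) + γ Σ_{x'} Z_{i,u}(x'|x)·max_{u'} Q(x',u') where each Z_{i,u}(·|x) is a probability vector on X and R_i ∈ ℝ^{X×U}. Then for every pair Q₁, Q₂ ∈ ℝ^{X×U}: ||σ̂_N(Q₁)||_diag^{1/2} ≤ √2·||σ̂_N(Q₂)||_diag^{1/2} + √8·||Q₁ − Q₂||_∞. -/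
open Finset

noncomputable section

variable {X U : Type*}

/-- The empirical Bellman optimality operator built from a single realization `(R, Z)`:
`T̂(Q)(x,u) = R(x,u) + γ Σ_{x'} Z_u(x'|x) max_{u'} Q(x',u')`. -/
def hatOp [Fintype X] [Fintype U] (γ : ℝ) (R : X → U → ℝ) (Z : U → X → X → ℝ)
    (Q : X → U → ℝ) : X → U → ℝ :=
  fun x u => R x u + γ * ∑ x', Z u x x' * (⨆ u', Q x' u')

/-- The `(x,u)` diagonal entry of the diagonal covariance estimate `σ̂_N(Q)` built from the
first `N` empirical Bellman optimality operators. -/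
def sigHat [Fintype X] [Fintype U] (γ : ℝ) (N : ℕ) (R : ℕ → X → U → ℝ)
    (Z : ℕ → U → X → X → ℝ) (Q : X → U → ℝ) (p : X × U) : ℝ :=
  1 / ((N : ℝ) * ((N : ℝ) - 1)) *
    ∑ i ∈ Finset.range N, ∑ j ∈ Finset.range N,
      if i < j then
        (hatOp γ (R i) (Z i) Q p.1 p.2 - hatOp γ (R j) (Z j) Q p.1 p.2) ^ 2
      else 0

/-- `‖σ̂_N(Q)‖_diag`: the maximum absolute diagonal entry of the diagonal matrix `σ̂_N(Q)`. -/
def sigHatNorm [Fintype X] [Fintype U] (γ : ℝ) (N : ℕ) (R : ℕ → X → U → ℝ)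
    (Z : ℕ → U → X → X → ℝ) (Q : X → U → ℝ) : ℝ :=
  ⨆ p : X × U, |sigHat γ N R Z Q p|

/-!
Each `T̂_i` is a `γ`-contraction in the sup norm: `Q ↦ max_u' Q(·, u')` is 1-Lipschitz and
`Z_{i,u}(·|x)` only averages. So at each `(x, u)` the values `a_i = T̂_i(Q₁)(x, u)` and
`b_i = T̂_i(Q₂)(x, u)` differ by at most `δ = ‖Q₁ - Q₂‖_∞`, whence
`(a_i - a_j)² ≤ 2 (b_i - b_j)² + 8 δ²`. Averaging over the `N (N - 1) / 2` pairs `i < j` gives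
`σ̂_N(Q₁) ≤ 2 σ̂_N(Q₂) + 4 δ²` entrywise; take the maximum and square roots.
-/

lemma abs_ciSup_sub_ciSup_le_norm_sub {ι : Type*} [Fintype ι] (f g : ι → ℝ) :
    |(⨆ i, f i) - ⨆ i, g i| ≤ ‖f - g‖ := by
  rcases isEmpty_or_nonempty ι with _ | _
  · simp
  have hle : ∀ f g : ι → ℝ, (⨆ i, f i) ≤ (⨆ i, g i) + ‖f - g‖ := fun f g =>
    ciSup_le fun i => by
      have hfg : f i - g i ≤ ‖f - g‖ := (le_abs_self _).trans (norm_le_pi_norm (f - g) i)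
      have hg : g i ≤ ⨆ i, g i := le_ciSup (Finite.bddAbove_range g) i
      linarith
  exact abs_sub_le_iff.2 ⟨by linarith [hle f g], by linarith [hle g f, norm_sub_rev f g]⟩

lemma abs_sum_mul_le_norm {ι : Type*} [Fintype ι] {w : ι → ℝ} (hw : ∀ i, 0 ≤ w i)
    (hw_sum : ∑ i, w i = 1) (v : ι → ℝ) : |∑ i, w i * v i| ≤ ‖v‖ :=
  calc |∑ i, w i * v i| ≤ ∑ i, w i * ‖v‖ := by
        refine (abs_sum_le_sum_abs _ _).trans (sum_le_sum fun i _ => ?_)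
        rw [abs_mul, abs_of_nonneg (hw i)]
        exact mul_le_mul_of_nonneg_left (norm_le_pi_norm v i) (hw i)
    _ = ‖v‖ := by rw [← sum_mul, hw_sum, one_mul]

lemma sq_sub_le_two_mul_sq_sub_add {a a' b b' δ : ℝ} (h : |a - b| ≤ δ) (h' : |a' - b'| ≤ δ) :
    (a - a') ^ 2 ≤ 2 * (b - b') ^ 2 + 8 * δ ^ 2 := by
  have hdev : ((a - b) - (a' - b')) ^ 2 ≤ (2 * δ) ^ 2 :=
    sq_le_sq' (by linarith [abs_le.1 h, abs_le.1 h']) (by linarith [abs_le.1 h, abs_le.1 h'])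
  calc (a - a') ^ 2 = ((b - b') + ((a - b) - (a' - b'))) ^ 2 := by ring
    _ ≤ 2 * ((b - b') ^ 2 + ((a - b) - (a' - b')) ^ 2) := add_sq_le
    _ ≤ 2 * (b - b') ^ 2 + 8 * δ ^ 2 := by linarith

lemma natCast_mul_natCast_sub_one_nonneg (N : ℕ) : 0 ≤ (N : ℝ) * ((N : ℝ) - 1) := by
  rcases N with _ | N
  · simp
  · push_cast
    nlinarith

lemma sum_range_sum_range_ite_lt (N : ℕ) :
    ∑ i ∈ range N, ∑ j ∈ range N, (if i < j then (1 : ℝ) else 0) = N * (N - 1) / 2 := by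
  induction N with
  | zero => simp
  | succ N ih =>
    have hlast : ∑ j ∈ range N, (if N < j then (1 : ℝ) else 0) = 0 :=
      sum_eq_zero fun j hj => if_neg (mem_range.1 hj).not_gt
    have hnew : ∑ i ∈ range N, (if i < N then (1 : ℝ) else 0) = N := by
      rw [sum_congr rfl fun i hi => if_pos (mem_range.1 hi)]
      simp
    simp only [sum_range_succ, sum_add_distrib, ih, hlast, hnew, lt_irrefl, if_false]
    push_cast
    ring

def sampleVariance (N : ℕ) (a : ℕ → ℝ) : ℝ :=
  1 / ((N : ℝ) * ((N : ℝ) - 1)) *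
    ∑ i ∈ range N, ∑ j ∈ range N, if i < j then (a i - a j) ^ 2 else 0

lemma sampleVariance_nonneg (N : ℕ) (a : ℕ → ℝ) : 0 ≤ sampleVariance N a := by
  refine mul_nonneg (one_div_nonneg.2 (natCast_mul_natCast_sub_one_nonneg N))
    (sum_nonneg fun i _ => sum_nonneg fun j _ => ?_)
  split_ifs <;> positivity

lemma sampleVariance_le_of_sq_sub_le {N : ℕ} {a b : ℕ → ℝ} {K C : ℝ} (hC : 0 ≤ C)
    (h : ∀ i j, (a i - a j) ^ 2 ≤ K * (b i - b j) ^ 2 + C) :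
    sampleVariance N a ≤ K * sampleVariance N b + C / 2 := by
  set c : ℝ := 1 / ((N : ℝ) * ((N : ℝ) - 1))
  have hc : 0 ≤ c := one_div_nonneg.2 (natCast_mul_natCast_sub_one_nonneg N)
  have hsum : (∑ i ∈ range N, ∑ j ∈ range N, if i < j then (a i - a j) ^ 2 else 0) ≤
      K * (∑ i ∈ range N, ∑ j ∈ range N, if i < j then (b i - b j) ^ 2 else 0) +
        C * (N * (N - 1) / 2) := by
    rw [← sum_range_sum_range_ite_lt, mul_sum, mul_sum, ← sum_add_distrib]
    refine sum_le_sum fun i _ => ?_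
    rw [mul_sum, mul_sum, ← sum_add_distrib]
    refine sum_le_sum fun j _ => ?_
    split_ifs
    · linarith [h i j]
    · simp
  -- Equality for `N ≥ 2`; for `N < 2` the prefactor is `1 / 0 = 0`.
  have hcount : c * (N * (N - 1) / 2) ≤ 1 / 2 := by
    rw [← mul_div_assoc, one_div_mul_eq_div]
    gcongr
    exact div_self_le_one _
  calc sampleVariance N a
      ≤ c * (K * (∑ i ∈ range N, ∑ j ∈ range N, if i < j then (b i - b j) ^ 2 else 0) +
          C * (N * (N - 1) / 2)) := mul_le_mul_of_nonneg_left hsum hc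
    _ = K * sampleVariance N b + C * (c * (N * (N - 1) / 2)) := by
      unfold sampleVariance; ring
    _ ≤ K * sampleVariance N b + C / 2 := by
      linarith [mul_le_mul_of_nonneg_left hcount hC]

lemma abs_hatOp_sub_hatOp_le [Fintype X] [Fintype U] (γ : ℝ) (R : X → U → ℝ)
    (Z : U → X → X → ℝ) (Q₁ Q₂ : X → U → ℝ) {x : X} {u : U} (hZ : ∀ x', 0 ≤ Z u x x')
    (hZ_sum : ∑ x', Z u x x' = 1) :
    |hatOp γ R Z Q₁ x u - hatOp γ R Z Q₂ x u| ≤ |γ| * ‖Q₁ - Q₂‖ := by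
  set M : (X → U → ℝ) → X → ℝ := fun Q x' => ⨆ u', Q x' u'
  have hM : ‖M Q₁ - M Q₂‖ ≤ ‖Q₁ - Q₂‖ :=
    (pi_norm_le_iff_of_nonneg (norm_nonneg _)).2 fun x' =>
      (abs_ciSup_sub_ciSup_le_norm_sub (Q₁ x') (Q₂ x')).trans (norm_le_pi_norm (Q₁ - Q₂) x')
  have hdiff : hatOp γ R Z Q₁ x u - hatOp γ R Z Q₂ x u
      = γ * ∑ x', Z u x x' * (M Q₁ - M Q₂) x' := by
    simp only [hatOp, M, Pi.sub_apply, mul_sub, sum_sub_distrib]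
    ring
  rw [hdiff, abs_mul]
  gcongr
  exact (abs_sum_mul_le_norm hZ hZ_sum _).trans hM

lemma sigHat_nonneg [Fintype X] [Fintype U] (γ : ℝ) (N : ℕ) (R : ℕ → X → U → ℝ)
    (Z : ℕ → U → X → X → ℝ) (Q : X → U → ℝ) (p : X × U) : 0 ≤ sigHat γ N R Z Q p :=
  sampleVariance_nonneg N _

theorem sigHat_lipschitz_general
    [Fintype X] [Fintype U]
    (γ : ℝ) (hγ : γ ∈ Set.Ioo (0 : ℝ) 1)
    (N : ℕ)
    (R : ℕ → X → U → ℝ) (Z : ℕ → U → X → X → ℝ)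
    (hZ : ∀ i u x, (∀ x', 0 ≤ Z i u x x') ∧ ∑ x', Z i u x x' = 1)
    (Q₁ Q₂ : X → U → ℝ) :
    Real.sqrt (sigHatNorm γ N R Z Q₁) ≤
      Real.sqrt 2 * Real.sqrt (sigHatNorm γ N R Z Q₂) + Real.sqrt 8 * ‖Q₁ - Q₂‖ := by
  set δ := ‖Q₁ - Q₂‖
  set s := sigHatNorm γ N R Z Q₂
  have hγ_abs : |γ| ≤ 1 := abs_le.2 ⟨by linarith [hγ.1], hγ.2.le⟩
  have hop : ∀ i x u, |hatOp γ (R i) (Z i) Q₁ x u - hatOp γ (R i) (Z i) Q₂ x u| ≤ δ :=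
    fun i x u => (abs_hatOp_sub_hatOp_le γ (R i) (Z i) Q₁ Q₂ (hZ i u x).1 (hZ i u x).2).trans
      (mul_le_of_le_one_left (norm_nonneg _) hγ_abs)
  have hpoint : ∀ p, sigHat γ N R Z Q₁ p ≤ 2 * sigHat γ N R Z Q₂ p + 8 * δ ^ 2 / 2 := fun p =>
    sampleVariance_le_of_sq_sub_le (by positivity) fun i j =>
      sq_sub_le_two_mul_sq_sub_add (hop i p.1 p.2) (hop j p.1 p.2)
  have hs : 0 ≤ s := Real.iSup_nonneg fun _ => abs_nonneg _
  have hnorm : sigHatNorm γ N R Z Q₁ ≤ 2 * s + 4 * δ ^ 2 := by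
    refine Real.iSup_le (fun p => ?_) (by positivity)
    rw [abs_of_nonneg (sigHat_nonneg γ N R Z Q₁ p)]
    have hp : sigHat γ N R Z Q₂ p ≤ s :=
      (le_abs_self _).trans
        (le_ciSup (f := fun p => |sigHat γ N R Z Q₂ p|) (Finite.bddAbove_range _) p)
    linarith [hpoint p]
  rw [Real.sqrt_le_left (by positivity)]
  have hsqrt2 := Real.sq_sqrt (zero_le_two : (0 : ℝ) ≤ 2)
  have hsqrt8 := Real.sq_sqrt (by norm_num : (0 : ℝ) ≤ 8)
  have hsqrt_s := Real.sq_sqrt hs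
  nlinarith [mul_nonneg (mul_nonneg (Real.sqrt_nonneg 2) (Real.sqrt_nonneg s))
    (mul_nonneg (Real.sqrt_nonneg 8) (norm_nonneg (Q₁ - Q₂)))]

/-- **Lemma (Statement 7).** Lipschitz property of the diagonal covariance estimate: for
empirical Bellman optimality operators built from arbitrary deterministic realizations
(each `Z_{i,u}(·|x)` a probability vector) and `N ≥ 2`, for every `Q₁, Q₂`,
`‖σ̂_N(Q₁)‖_diag^{1/2} ≤ √2 ‖σ̂_N(Q₂)‖_diag^{1/2} + √8 ‖Q₁ - Q₂‖_∞`. -/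
theorem sigHat_lipschitz
    [Fintype X] [Fintype U] [Nonempty X] [Nonempty U]
    (γ : ℝ) (hγ : γ ∈ Set.Ioo (0 : ℝ) 1)
    (N : ℕ) (hN : 2 ≤ N)
    (R : ℕ → X → U → ℝ) (Z : ℕ → U → X → X → ℝ)
    (hZ : ∀ i u x, (∀ x', 0 ≤ Z i u x x') ∧ ∑ x', Z i u x x' = 1)
    (Q₁ Q₂ : X → U → ℝ) :
    Real.sqrt (sigHatNorm γ N R Z Q₁) ≤
      Real.sqrt 2 * Real.sqrt (sigHatNorm γ N R Z Q₂) + Real.sqrt 8 * ‖Q₁ - Q₂‖ :=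
  sigHat_lipschitz_general γ hγ N R Z hZ Q₁ Q₂

end
end
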